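/- arXiv:1409.4810 — 4 statements merged into one kernel-verified Lean document; each statement's English description precedes it below -/
import Mathlib

section
/- The sequence of eigenvalues of the Stokes operator on the two-dimensional torus satisfies limsup_{j→∞} (λ_{j+1} − λ_j) = ∞, where λ_j is the increasing enumeration (with multiplicity ignored for distinct values) of L^{-2}(k₁² + k₂²) over nonzero integer vectors (k₁,k₂). -/
/-- The increasing enumeration `λ_j` (indexed from `j = 0`, so `λ_{j+1} = stokesEig L j`)
of the distinct eigenvalues `L⁻²(k₁² + k₂²)`, `(k₁,k₂) ∈ ℤ² \ {0}`, of the Stokes operator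
on the two-dimensional torus `[0, 2πL]²`. -/
noncomputable def stokesEig (L : ℝ) (j : ℕ) : ℝ :=
  L ^ (-2 : ℤ) *
    (Nat.nth (fun n => 0 < n ∧ ∃ k₁ k₂ : ℤ, (n : ℤ) = k₁ ^ 2 + k₂ ^ 2) j : ℝ)

namespace StokesGapAux

/-- The eigenvalue predicate: positive sums of two integer squares. -/
def P (n : ℕ) : Prop := 0 < n ∧ ∃ k₁ k₂ : ℤ, (n : ℤ) = k₁ ^ 2 + k₂ ^ 2

lemma P_one : P 1 := ⟨one_pos, 1, 0, by norm_num⟩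

lemma P_infinite : (setOf P).Infinite := by
  refine Set.infinite_of_injective_forall_mem (f := fun k : ℕ => (k + 1) ^ 2) ?_ ?_
  · intro a b hab
    simpa using Nat.pow_left_injective (by norm_num) hab
  · intro k
    exact ⟨by positivity, (k + 1 : ℤ), 0, by push_cast; ring⟩

/-- If `v ≡ q [MOD q²]` for a prime `q ≡ 3 (mod 4)`, then `v` is not a sum of two squares. -/
lemma not_P_of_mod {q v : ℕ} (hq : q.Prime) (hq4 : q % 4 = 3) (hv : v % q ^ 2 = q) : ¬ P v := by
  rintro ⟨hpos, k₁, k₂, hk⟩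
  have hv0 : v ≠ 0 := hpos.ne'
  have hrep : ∃ x y : ℕ, v = x ^ 2 + y ^ 2 := by
    refine ⟨k₁.natAbs, k₂.natAbs, ?_⟩
    have h' : (v : ℤ) = (k₁.natAbs : ℤ) ^ 2 + (k₂.natAbs : ℤ) ^ 2 := by
      rw [Int.natAbs_sq, Int.natAbs_sq]; exact hk
    exact_mod_cast h' 
  have heven := Nat.eq_sq_add_sq_iff.mp hrep q (Nat.mem_primeFactors.mpr ⟨hq, (Nat.dvd_mod_iff (dvd_pow_self q two_ne_zero)).mp (by rw [hv]), hv0⟩) hq4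
  -- compute padicValNat q v = 1
  obtain ⟨w, hw⟩ : ∃ w, v = q ^ 2 * w + q := by
    refine ⟨v / q ^ 2, ?_⟩
    conv_lhs => rw [← Nat.div_add_mod v (q ^ 2), hv]
  have hdvd : q ∣ v := ⟨q * w + 1, by rw [hw]; ring⟩
  have hndvd : ¬ q ^ 2 ∣ v := by
    rintro ⟨u, hu⟩
    rw [hu, Nat.mul_mod_right] at hv
    have := hq.two_le
    omega
  have h1 : 1 ≤ v.factorization q := by
    rw [← Nat.Prime.pow_dvd_iff_le_factorization hq hv0, pow_one]; exact hdvd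
  have h2 : ¬ 2 ≤ v.factorization q := by
    rw [← Nat.Prime.pow_dvd_iff_le_factorization hq hv0]; exact hndvd
  have hval : padicValNat q v = 1 := by
    rw [← Nat.factorization_def v hq]; omega
  rw [hval] at heven
  simp at heven

/-- For every `m` there is a residue class all whose elements start runs of
`m` consecutive non-sums-of-two-squares. -/
lemma block (m : ℕ) : ∃ M r : ℕ, m < M ∧
    ∀ n, n % M = r % M → ∀ i, 1 ≤ i → i ≤ m → ¬ P (n + i) := by
  induction m with
  | zero => exact ⟨1, 0, one_pos, fun n _ i h1 h0 => absurd (h1.trans h0) (by norm_num)⟩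
  | succ m ih =>
    obtain ⟨M, r, hM, hblk⟩ := ih
    have h3 : IsUnit (3 : ZMod 4) := by decide
    obtain ⟨q, hqM, hq, hq3⟩ := Nat.forall_exists_prime_gt_and_eq_mod h3 M
    have hq4 : q % 4 = 3 := by
      have : ((q : ℕ) : ZMod 4) = ((3 : ℕ) : ZMod 4) := by exact_mod_cast hq3
      rw [ZMod.natCast_eq_natCast_iff'] at this
      omega
    have hMpos : 0 < M := lt_of_le_of_lt (Nat.zero_le m) hM
    have hco : Nat.Coprime (q ^ 2) M := by
      refine Nat.Coprime.pow_left _ ((hq.coprime_iff_not_dvd).mpr fun hd => ?_)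
      exact absurd (Nat.le_of_dvd hMpos hd) (by omega)
    obtain ⟨r', hr'1, hr'2⟩ := Nat.chineseRemainder hco (q - (m + 1)) r
    have hq2 : q < q ^ 2 := by nlinarith [hq.two_le]
    have hmq : m + 1 < q := by omega
    refine ⟨q ^ 2 * M, r', ?_, ?_⟩
    · calc m + 1 < q := hmq
        _ ≤ q ^ 2 := hq2.le
        _ ≤ q ^ 2 * M := Nat.le_mul_of_pos_right _ hMpos
    · intro n hn i h1 hi
      have hnM : n ≡ r' [MOD q ^ 2 * M] := hn
      rcases Nat.lt_or_ge i (m + 1) with him | him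
      · exact hblk n ((hnM.of_mul_left _).trans hr'2) i h1 (by omega)
      · have hieq : i = m + 1 := by omega
        subst hieq
        have hmod : n + (m + 1) ≡ (q - (m + 1)) + (m + 1) [MOD q ^ 2] :=
          Nat.ModEq.add_right _ ((hnM.of_mul_right _).trans hr'1)
        have hqe : (q - (m + 1)) + (m + 1) = q := by omega
        rw [hqe] at hmod
        have : (n + (m + 1)) % q ^ 2 = q := by
          have := hmod
          unfold Nat.ModEq at this
          rwa [Nat.mod_eq_of_lt hq2] at this
        exact not_P_of_mod hq hq4 this

/-- Arbitrarily large runs of `m` consecutive non-sums-of-two-squares. -/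
lemma block' (m B : ℕ) : ∃ n, B ≤ n ∧ ∀ i, 1 ≤ i → i ≤ m → ¬ P (n + i) := by
  obtain ⟨M, r, hM, hblk⟩ := block m
  have hMpos : 0 < M := lt_of_le_of_lt (Nat.zero_le m) hM
  refine ⟨r + B * M, ?_, hblk _ (by simp [Nat.add_mul_mod_self_right])⟩
  calc B = B * 1 := (mul_one B).symm
    _ ≤ B * M := Nat.mul_le_mul_left _ hMpos
    _ ≤ r + B * M := Nat.le_add_left _ _

end StokesGapAux

open StokesGapAux

/-- The eigenvalues of the Stokes operator on the 2D torus satisfy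
`limsup_{j→∞} (λ_{j+1} - λ_j) = ∞`. -/
theorem stokes_spectral_gap (L : ℝ) (hL : 0 < L) :
    Filter.limsup (fun j : ℕ => ((stokesEig L (j + 1) - stokesEig L j : ℝ) : EReal))
      Filter.atTop = ⊤ := by
  classical
  have hinf : (setOf P).Infinite := P_infinite
  have hP : (fun n : ℕ => 0 < n ∧ ∃ k₁ k₂ : ℤ, (n : ℤ) = k₁ ^ 2 + k₂ ^ 2) = P := rfl
  set c : ℝ := L ^ (-2 : ℤ) with hcdef
  have hcpos : 0 < c := zpow_pos hL _
  rw [EReal.eq_top_iff_forall_lt]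
  intro y
  obtain ⟨m, hm⟩ : ∃ m : ℕ, y + 1 ≤ c * m := by
    refine ⟨⌈(y + 1) / c⌉₊, ?_⟩
    rcases le_or_gt (y + 1) 0 with h | h
    · exact h.trans (by positivity)
    · rw [← div_le_iff₀' hcpos]
      exact Nat.le_ceil _
  have hfreq : ∃ᶠ j in Filter.atTop,
      ((y + 1 : ℝ) : EReal) ≤ ((stokesEig L (j + 1) - stokesEig L j : ℝ) : EReal) := by
    rw [Filter.frequently_atTop]
    intro B
    obtain ⟨n, hnB, hblk⟩ := StokesGapAux.block' m (max (Nat.nth P B) 1)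
    have hn1 : 1 ≤ n := le_trans (le_max_right _ _) hnB
    have hnthB : Nat.nth P B ≤ n := le_trans (le_max_left _ _) hnB
    have hcnt : 0 < Nat.count P (n + 1) := by
      rw [Nat.lt_nth_iff_count_lt hinf]
      calc Nat.nth P 0 = sInf {n | P n} := Nat.nth_zero
        _ ≤ 1 := Nat.sInf_le P_one
        _ < n + 1 := by omega
    set j : ℕ := Nat.count P (n + 1) - 1 with hjdef
    have hjc : j + 1 = Nat.count P (n + 1) := by omega
    have h_le : Nat.nth P j ≤ n := by
      have : Nat.nth P j < n + 1 := by
        rw [← Nat.lt_nth_iff_count_lt hinf]; omega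
      omega
    have h_ge : n + 1 ≤ Nat.nth P (j + 1) := by
      rw [hjc, ← Nat.count_le_iff_le_nth hinf]
    have h_big : n + m + 1 ≤ Nat.nth P (j + 1) := by
      by_contra hcon
      push_neg at hcon
      have hmem : P (Nat.nth P (j + 1)) := Nat.nth_mem_of_infinite hinf _
      have : Nat.nth P (j + 1) = n + (Nat.nth P (j + 1) - n) := by omega
      exact hblk _ (by omega) (by omega) (this ▸ hmem)
    have hjB : B ≤ j := by
      have : Nat.nth P B < Nat.nth P (j + 1) := by omega
      have := (Nat.nth_lt_nth hinf).mp this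
      omega
    refine ⟨j, hjB, ?_⟩
    rw [EReal.coe_le_coe_iff]
    have hdiff : stokesEig L (j + 1) - stokesEig L j
        = c * ((Nat.nth P (j + 1) : ℝ) - (Nat.nth P j : ℝ)) := by
      simp only [stokesEig, hP, ← hcdef]; ring
    rw [hdiff]
    have hge : (m : ℝ) ≤ (Nat.nth P (j + 1) : ℝ) - (Nat.nth P j : ℝ) := by
      have h1 : (Nat.nth P j : ℝ) ≤ (n : ℝ) := by exact_mod_cast h_le
      have h2 : ((n + m + 1 : ℕ) : ℝ) ≤ (Nat.nth P (j + 1) : ℝ) := by exact_mod_cast h_big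
      push_cast at h2 ⊢
      linarith
    calc y + 1 ≤ c * m := hm
      _ ≤ c * ((Nat.nth P (j + 1) : ℝ) - (Nat.nth P j : ℝ)) :=
        mul_le_mul_of_nonneg_left hge hcpos.le
  calc (y : EReal) < ((y + 1 : ℝ) : EReal) := by exact_mod_cast lt_add_one y
    _ ≤ _ := Filter.le_limsup_of_frequently_le' hfreq
end

section
/- Let A be a positive self-adjoint operator on a Hilbert space H with eigenvalues λ₁ ≤ λ₂ ≤ ⋯ (counted with multiplicity) and orthonormal eigenbasis, and let P_N be the orthogonal projection onto the span of the first N eigenvectors, Q_N = I − P_N. Suppose F : H → H is globally Lipschitz with constant L, and u₁, u₂ solve u' + νAu + F(u) = 0 on [0, T] with ν > 0. Set p(t) = P_N(u₁(t) − u₂(t)), q(t) = Q_N(u₁(t) − u₂(t)). If ‖q(t)‖ > γ‖p(t)‖ for all t ∈ [0,T] with γ > 0, and λ_{N+1} > ν^{-1}L(1/γ + 1), then ‖q(t)‖ ≤ e^{−b_N t}‖q(0)‖ for all t ∈ [0,T], where b_N = νλ_{N+1} − L(1/γ + 1). -/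
open scoped RealInnerProductSpace

set_option maxHeartbeats 1000000

/-- Decay property (strong squeezing, part 2): for two solutions of `u' + νAu + F(u) = 0`
with `F` globally Lipschitz of constant `Lip`, if the difference stays outside the cone
(`‖q(t)‖ > γ‖p(t)‖` on `[0,T]`) and `λ_{N+1} > ν⁻¹ Lip (1/γ + 1)`, then
`‖q(t)‖ ≤ e^{-b_N t} ‖q(0)‖` with `b_N = νλ_{N+1} - Lip(1/γ + 1)`. -/
theorem decay_property {H : Type*} [NormedAddCommGroup H] [InnerProductSpace ℝ H]
    [CompleteSpace H]
    (A : H →L[ℝ] H) (hA : IsSelfAdjoint A)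
    (e : ℕ → H) (he : Orthonormal ℝ e)
    (hcomplete : (Submodule.span ℝ (Set.range e)).topologicalClosure = ⊤)
    (lam : ℕ → ℝ) (hmono : Monotone lam) (hlam₁ : 0 < lam 1)
    (heig : ∀ i : ℕ, A (e i) = lam (i + 1) • e i)
    (F : H → H) (Lip : ℝ) (hLippos : 0 < Lip)
    (hF : ∀ x y : H, ‖F x - F y‖ ≤ Lip * ‖x - y‖)
    (ν γ T : ℝ) (hν : 0 < ν) (hγ : 0 < γ) (hT : 0 < T)
    (N : ℕ)
    (u₁ u₂ : ℝ → H)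
    (hu₁ : ∀ t ∈ Set.Icc (0 : ℝ) T, HasDerivAt u₁ (-(ν • A (u₁ t)) - F (u₁ t)) t)
    (hu₂ : ∀ t ∈ Set.Icc (0 : ℝ) T, HasDerivAt u₂ (-(ν • A (u₂ t)) - F (u₂ t)) t)
    (p q : ℝ → H)
    (hp : ∀ t : ℝ, p t = ∑ i ∈ Finset.range N, ⟪e i, u₁ t - u₂ t⟫ • e i)
    (hq : ∀ t : ℝ, q t = (u₁ t - u₂ t) - p t)
    (hout : ∀ t ∈ Set.Icc (0 : ℝ) T, γ * ‖p t‖ < ‖q t‖)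
    (hspec : ν⁻¹ * Lip * (1 / γ + 1) < lam (N + 1)) :
    ∀ t ∈ Set.Icc (0 : ℝ) T,
      ‖q t‖ ≤ Real.exp (-(ν * lam (N + 1) - Lip * (1 / γ + 1)) * t) * ‖q 0‖ := by
  classical
  set b : ℝ := ν * lam (N + 1) - Lip * (1 / γ + 1) with hb
  set w : ℝ → H := fun t => u₁ t - u₂ t with hwdef
  -- the derivative of the difference
  set wd : ℝ → H := fun t => -(ν • A (w t)) - (F (u₁ t) - F (u₂ t)) with hwddef
  have hw' : ∀ t ∈ Set.Icc (0 : ℝ) T, HasDerivAt w (wd t) t := by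
    intro t ht
    have h := (hu₁ t ht).sub (hu₂ t ht)
    convert h using 1
    show -(ν • A (u₁ t - u₂ t)) - (F (u₁ t) - F (u₂ t)) = _
    simp only [hwddef, hwdef, map_sub, smul_sub]
    abel
    exact rfl
  have hee : ∀ i j, ⟪e i, e j⟫ = if i = j then (1 : ℝ) else 0 := orthonormal_iff_ite.mp he
  -- inner products of e i against finite sums of the projection type
  have hsum_inner : ∀ (c : ℕ → ℝ) (i : ℕ), i ∈ Finset.range N →
      ⟪e i, ∑ j ∈ Finset.range N, c j • e j⟫ = c i := by
    intro c i hi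
    rw [inner_sum]
    rw [Finset.sum_eq_single i]
    · rw [real_inner_smul_right, hee i i, if_pos rfl, mul_one]
    · intro j hj hji
      rw [real_inner_smul_right, hee i j, if_neg (fun h => hji h.symm), mul_zero]
    · intro h; exact absurd hi h
  -- q is orthogonal to the first N eigenvectors
  have hqperp : ∀ t : ℝ, ∀ i ∈ Finset.range N, ⟪e i, q t⟫ = 0 := by
    intro t i hi
    rw [hq t, hp t, inner_sub_right, hsum_inner _ i hi]
    exact sub_self _
  -- Hilbert basis
  let bB : HilbertBasis ℕ ℝ H := HilbertBasis.mk he hcomplete.ge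
  have hbB : ∀ i, bB i = e i := fun i => congrFun (HilbertBasis.coe_mk he hcomplete.ge) i
  -- the spectral lower bound
  have hspectral : ∀ x : H, (∀ i ∈ Finset.range N, ⟪e i, x⟫ = 0) →
      lam (N + 1) * ⟪x, x⟫ ≤ ⟪A x, x⟫ := by
    intro x hx
    have h1 : HasSum (fun i => ⟪x, e i⟫ * ⟪e i, x⟫) ⟪x, x⟫ := by
      have := bB.hasSum_inner_mul_inner x x
      simpa only [hbB] using this
    have h2 : HasSum (fun i => ⟪A x, e i⟫ * ⟪e i, x⟫) ⟪A x, x⟫ := by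
      have := bB.hasSum_inner_mul_inner (A x) x
      simpa only [hbB] using this
    have h3 := h1.mul_left (lam (N + 1))
    refine hasSum_le ?_ h3 h2
    intro i
    have hsym : ⟪x, e i⟫ = ⟪e i, x⟫ := real_inner_comm _ _
    have hAxe : ⟪A x, e i⟫ = lam (i + 1) * ⟪e i, x⟫ := by
      have hsa : ⟪A x, e i⟫ = ⟪x, A (e i)⟫ := hA.isSymmetric x (e i)
      rw [hsa, heig i, real_inner_smul_right, hsym]
    rw [hAxe, hsym]
    by_cases hiN : i < N
    · rw [hx i (Finset.mem_range.mpr hiN)]; ring_nf; exact le_refl _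
    · have hlm : lam (N + 1) ≤ lam (i + 1) := hmono (by omega)
      have hc : 0 ≤ ⟪e i, x⟫ * ⟪e i, x⟫ := mul_self_nonneg _
      nlinarith
  -- the derivative of q
  set qd : ℝ → H := fun t => wd t - ∑ i ∈ Finset.range N, ⟪e i, wd t⟫ • e i with hqddef
  have hqfun : q = fun t => w t - ∑ i ∈ Finset.range N, ⟪e i, w t⟫ • e i := by
    funext t; rw [hq t, hp t]
  have hq' : ∀ t ∈ Set.Icc (0 : ℝ) T, HasDerivAt q (qd t) t := by
    intro t ht
    rw [hqfun]
    exact (hw' t ht).sub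
      (HasDerivAt.fun_sum fun i _ =>
        (((hasDerivAt_const t (e i)).inner ℝ (hw' t ht)).smul_const (e i)).congr_deriv
          (by simp))
  -- the key differential inequality
  have hkey : ∀ t ∈ Set.Icc (0 : ℝ) T, ⟪qd t, q t⟫ ≤ -b * ⟪q t, q t⟫ := by
    intro t ht
    -- the projection part of qd is orthogonal to q
    have hproj : ⟪∑ i ∈ Finset.range N, ⟪e i, wd t⟫ • e i, q t⟫ = 0 := by
      rw [sum_inner]
      refine Finset.sum_eq_zero fun i hi => ?_
      rw [real_inner_smul_left, hqperp t i hi, mul_zero]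
    have hqd_q : ⟪qd t, q t⟫ = ⟪wd t, q t⟫ := by
      rw [hqddef]; simp only [inner_sub_left, hproj, sub_zero]
    -- A p ⟂ q
    have hApq : ⟪A (p t), q t⟫ = 0 := by
      rw [hp t, map_sum]
      rw [sum_inner]
      refine Finset.sum_eq_zero fun i hi => ?_
      rw [map_smul, heig i, smul_smul, real_inner_smul_left, hqperp t i hi, mul_zero]
    have hwt : w t = p t + q t := by show u₁ t - u₂ t = _; rw [hq t]; abel
    have hAwq : lam (N + 1) * ⟪q t, q t⟫ ≤ ⟪A (w t), q t⟫ := by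
      rw [hwt, map_add, inner_add_left, hApq, zero_add]
      exact hspectral (q t) (hqperp t)
    -- Lipschitz bound
    have hnormw : ‖w t‖ ≤ (1 / γ + 1) * ‖q t‖ := by
      have hpq := hout t ht
      have h1 : ‖p t‖ ≤ (1 / γ) * ‖q t‖ := by
        rw [div_mul_eq_mul_div, le_div_iff₀ hγ]
        nlinarith
      calc ‖w t‖ = ‖p t + q t‖ := by rw [hwt]
        _ ≤ ‖p t‖ + ‖q t‖ := norm_add_le _ _
        _ ≤ (1 / γ) * ‖q t‖ + 1 * ‖q t‖ := by rw [one_mul]; exact add_le_add h1 (le_refl _)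
        _ = (1 / γ + 1) * ‖q t‖ := by ring
    have hFq : |⟪F (u₁ t) - F (u₂ t), q t⟫| ≤ Lip * (1 / γ + 1) * ‖q t‖ ^ 2 := by
      calc |⟪F (u₁ t) - F (u₂ t), q t⟫| ≤ ‖F (u₁ t) - F (u₂ t)‖ * ‖q t‖ :=
            abs_real_inner_le_norm _ _
        _ ≤ (Lip * ‖w t‖) * ‖q t‖ := by
            have := hF (u₁ t) (u₂ t)
            have hqn : (0 : ℝ) ≤ ‖q t‖ := norm_nonneg _
            exact mul_le_mul_of_nonneg_right this hqn
        _ ≤ (Lip * ((1 / γ + 1) * ‖q t‖)) * ‖q t‖ := by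
            have hqn : (0 : ℝ) ≤ ‖q t‖ := norm_nonneg _
            have := mul_le_mul_of_nonneg_left hnormw hLippos.le
            exact mul_le_mul_of_nonneg_right this hqn
        _ = Lip * (1 / γ + 1) * ‖q t‖ ^ 2 := by ring
    have hqq : ⟪q t, q t⟫ = ‖q t‖ ^ 2 := real_inner_self_eq_norm_sq _
    have hqd_eval : ⟪wd t, q t⟫ = -(ν * ⟪A (w t), q t⟫) - ⟪F (u₁ t) - F (u₂ t), q t⟫ := by
      rw [hwddef]
      simp only [inner_sub_left, inner_neg_left, real_inner_smul_left]
    rw [hqq] at hAwq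
    rw [hqd_q, hqd_eval, hqq, hb]
    have habs := abs_le.mp hFq
    nlinarith [habs.1, habs.2, mul_le_mul_of_nonneg_left hAwq hν.le]
  -- the Lyapunov function
  set ψ : ℝ → ℝ := fun t => Real.exp (2 * b * t) * ⟪q t, q t⟫ with hψdef
  have hψ' : ∀ t ∈ Set.Icc (0 : ℝ) T,
      HasDerivAt ψ (2 * b * Real.exp (2 * b * t) * ⟪q t, q t⟫ +
        Real.exp (2 * b * t) * (⟪q t, qd t⟫ + ⟪qd t, q t⟫)) t := by
    intro t ht
    have hlin : HasDerivAt (fun s : ℝ => 2 * b * s) (2 * b) t := by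
      simpa using (hasDerivAt_id t).const_mul (2 * b)
    have hexp := hlin.exp
    have hinner : HasDerivAt (fun t => ⟪q t, q t⟫) (⟪q t, qd t⟫ + ⟪qd t, q t⟫) t :=
      (hq' t ht).inner ℝ (hq' t ht)
    exact (hexp.mul hinner).congr_deriv (by ring)
  -- ψ is antitone on [0, T]
  have hψanti : AntitoneOn ψ (Set.Icc 0 T) := by
    apply antitoneOn_of_deriv_nonpos (convex_Icc 0 T)
    · exact fun t ht => (hψ' t ht).continuousAt.continuousWithinAt
    · intro t ht
      rw [interior_Icc] at ht
      exact (hψ' t (Set.mem_Icc_of_Ioo ht)).differentiableAt.differentiableWithinAt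
    · intro t ht
      rw [interior_Icc] at ht
      have ht' : t ∈ Set.Icc (0 : ℝ) T := Set.mem_Icc_of_Ioo ht
      rw [(hψ' t ht').deriv]
      have hk := hkey t ht'
      have hsym : ⟪q t, qd t⟫ = ⟪qd t, q t⟫ := real_inner_comm _ _
      have hepos := Real.exp_pos (2 * b * t)
      rw [hsym]
      nlinarith
  -- conclude
  intro t ht
  have h0 : (0 : ℝ) ∈ Set.Icc (0 : ℝ) T := ⟨le_refl _, hT.le⟩
  have hψle : ψ t ≤ ψ 0 := hψanti h0 ht ht.1
  have hqq : ∀ s : ℝ, ⟪q s, q s⟫ = ‖q s‖ ^ 2 := fun s => real_inner_self_eq_norm_sq _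
  have hψle' : Real.exp (2 * b * t) * ‖q t‖ ^ 2 ≤ ‖q 0‖ ^ 2 := by
    have := hψle
    simp only [hψdef, hqq, mul_zero, Real.exp_zero, one_mul] at this
    exact this
  have hepos := Real.exp_pos (2 * b * t)
  have hsq : ‖q t‖ ^ 2 ≤ (Real.exp (-b * t) * ‖q 0‖) ^ 2 := by
    have hrhs : (Real.exp (-b * t) * ‖q 0‖) ^ 2 = (Real.exp (2 * b * t))⁻¹ * ‖q 0‖ ^ 2 := by
      rw [mul_pow, sq (Real.exp (-b * t)), ← Real.exp_add, ← Real.exp_neg]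
      ring_nf
    rw [hrhs]
    rw [← sub_nonneg] at hψle' ⊢
    have : (Real.exp (2 * b * t))⁻¹ * ‖q 0‖ ^ 2 - ‖q t‖ ^ 2 =
        (Real.exp (2 * b * t))⁻¹ * (‖q 0‖ ^ 2 - Real.exp (2 * b * t) * ‖q t‖ ^ 2) := by
      field_simp
    rw [this]
    exact mul_nonneg (inv_nonneg.mpr hepos.le) (by linarith)
  have hrpos : 0 ≤ Real.exp (-b * t) * ‖q 0‖ :=
    mul_nonneg (Real.exp_pos _).le (norm_nonneg _)
  have := Real.sqrt_le_sqrt hsq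
  rwa [Real.sqrt_sq (norm_nonneg _), Real.sqrt_sq hrpos] at this
end

section
/- Under the same abstract setup (A positive self-adjoint with eigenvalues λ_j, spectral projections P_N, Q_N; F : H → H globally Lipschitz with constant L; u₁, u₂ strong solutions of u' + νAu + F(u) = 0), if λ_{N+1} − λ_N > L(γ+1)²/(νγ) and ‖Q_N(u₁(t₀) − u₂(t₀))‖ ≤ γ‖P_N(u₁(t₀) − u₂(t₀))‖ for some t₀ ≥ 0, then ‖Q_N(u₁(t) − u₂(t))‖ ≤ γ‖P_N(u₁(t) − u₂(t))‖ for all t ≥ t₀. -/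
open scoped RealInnerProductSpace

set_option maxHeartbeats 1600000

private lemma cone_arith {ν γ Lip lamN lamL a b Q Pp gq gp : ℝ}
    (hν : 0 < ν) (hγ : 0 < γ) (hLip : 0 < Lip) (hlamN : 0 ≤ lamN)
    (hgap : Lip * (γ + 1) ^ 2 < ν * γ * (lamL - lamN))
    (ha0 : 0 ≤ a) (hb0 : 0 ≤ b) (hab : γ * a ≤ b)
    (hAq : lamL * b ^ 2 ≤ Q) (hAp : Pp ≤ lamN * a ^ 2)
    (habs1 : -gq ≤ Lip * (a + b) * b) (habs2 : gp ≤ Lip * (a + b) * a) :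
    -(ν * Q) - gq + (-(ν * Q) - gq) - γ ^ 2 * (-(ν * Pp) - gp + (-(ν * Pp) - gp)) ≤ 0 := by
  have hγa2 : γ ^ 2 * a ^ 2 ≤ b ^ 2 := by nlinarith [mul_nonneg hγ.le ha0]
  have hstep1 : γ * (a + b) ≤ (1 + γ) * b := by nlinarith
  have hstep2 : b + γ ^ 2 * a ≤ (1 + γ) * b := by
    nlinarith [mul_le_mul_of_nonneg_left hab hγ.le]
  have hstep3 : γ * ((a + b) * (b + γ ^ 2 * a)) ≤ (1 + γ) ^ 2 * b ^ 2 := by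
    nlinarith [mul_le_mul hstep1 hstep2 (by positivity) (by positivity)]
  have h1 : ν * γ ^ 2 * Pp ≤ ν * lamN * b ^ 2 := by
    have e1 := mul_le_mul_of_nonneg_left hAp (by positivity : (0:ℝ) ≤ ν * γ ^ 2)
    have e2 := mul_le_mul_of_nonneg_left hγa2 (mul_nonneg hν.le hlamN)
    linarith
  have g1 := mul_le_mul_of_nonneg_left hAq (mul_nonneg hγ.le hν.le)
  have g2 := mul_le_mul_of_nonneg_left h1 hγ.le
  have g3 := mul_le_mul_of_nonneg_left habs1 hγ.le
  have g4 := mul_le_mul_of_nonneg_left habs2 (by positivity : (0:ℝ) ≤ γ * γ ^ 2)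
  have g5 := mul_le_mul_of_nonneg_left hstep3 hLip.le
  have g6 := mul_le_mul_of_nonneg_right hgap.le (sq_nonneg b)
  have hfinal : γ * (-(ν * Q) - gq + (-(ν * Q) - gq)
      - γ ^ 2 * (-(ν * Pp) - gp + (-(ν * Pp) - gp))) ≤ 0 := by linarith
  nlinarith [hfinal, hγ]


/-- Cone invariance property (strong squeezing, part 1): for two solutions of
`u' + νAu + F(u) = 0` with `F` globally Lipschitz of constant `Lip`, if the spectral gap
condition `λ_{N+1} - λ_N > Lip(γ+1)²/(νγ)` holds and the difference is inside the cone
at time `t₀` (`‖q(t₀)‖ ≤ γ‖p(t₀)‖`), then it stays inside the cone for all `t ≥ t₀`. -/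
theorem cone_invariance {H : Type*} [NormedAddCommGroup H] [InnerProductSpace ℝ H]
    [CompleteSpace H]
    (A : H →L[ℝ] H) (hA : IsSelfAdjoint A)
    (e : ℕ → H) (he : Orthonormal ℝ e)
    (hcomplete : (Submodule.span ℝ (Set.range e)).topologicalClosure = ⊤)
    (lam : ℕ → ℝ) (hmono : Monotone lam) (hlam₁ : 0 < lam 1)
    (heig : ∀ i : ℕ, A (e i) = lam (i + 1) • e i)
    (F : H → H) (Lip : ℝ) (hLippos : 0 < Lip)
    (hF : ∀ x y : H, ‖F x - F y‖ ≤ Lip * ‖x - y‖)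
    (ν γ : ℝ) (hν : 0 < ν) (hγ : 0 < γ)
    (N : ℕ)
    (u₁ u₂ : ℝ → H)
    (hu₁ : ∀ t : ℝ, HasDerivAt u₁ (-(ν • A (u₁ t)) - F (u₁ t)) t)
    (hu₂ : ∀ t : ℝ, HasDerivAt u₂ (-(ν • A (u₂ t)) - F (u₂ t)) t)
    (p q : ℝ → H)
    (hp : ∀ t : ℝ, p t = ∑ i ∈ Finset.range N, ⟪e i, u₁ t - u₂ t⟫ • e i)
    (hq : ∀ t : ℝ, q t = (u₁ t - u₂ t) - p t)
    (hgap : Lip * (γ + 1) ^ 2 / (ν * γ) < lam (N + 1) - lam N)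
    (t₀ : ℝ) (ht₀ : 0 ≤ t₀)
    (hin : ‖q t₀‖ ≤ γ * ‖p t₀‖) :
    ∀ t : ℝ, t₀ ≤ t → ‖q t‖ ≤ γ * ‖p t‖ := by
  classical
  -- the difference of solutions and the Lipschitz term
  set w : ℝ → H := fun t => u₁ t - u₂ t with hwdef
  set g : ℝ → H := fun t => F (u₁ t) - F (u₂ t) with hgdef
  have hgw : ∀ t, ‖g t‖ ≤ Lip * ‖w t‖ := fun t => hF _ _
  -- the spectral projection
  set P : H →L[ℝ] H := ∑ i ∈ Finset.range N, (innerSL ℝ (e i)).smulRight (e i) with hPdef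
  have hPapply : ∀ x : H, P x = ∑ i ∈ Finset.range N, ⟪e i, x⟫ • e i := by
    intro x
    simp [hPdef, ContinuousLinearMap.sum_apply, ContinuousLinearMap.smulRight_apply]
  have hone : ∀ i j, ⟪e i, e j⟫ = if i = j then (1:ℝ) else 0 := orthonormal_iff_ite.mp he
  have hsym : ∀ x y : H, ⟪A x, y⟫ = ⟪x, A y⟫ := fun x y => hA.isSymmetric x y
  -- ⟪e i, P x⟫ = ⟪e i, x⟫ for i < N
  have hPinner : ∀ (x : H), ∀ i ∈ Finset.range N, ⟪e i, P x⟫ = ⟪e i, x⟫ := by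
    intro x i hi
    rw [hPapply, inner_sum]
    simp only [real_inner_smul_right, hone, mul_ite, mul_one, mul_zero]
    rw [Finset.sum_ite_eq (Finset.range N) i (fun j => ⟪e j, x⟫), if_pos hi]
  -- orthogonality of the complementary part to each e i, i < N
  have hortho : ∀ (x : H), ∀ i ∈ Finset.range N, ⟪e i, x - P x⟫ = 0 := by
    intro x i hi
    rw [inner_sub_right, hPinner x i hi, sub_self]
  -- P y ⊥ (x - P x)
  have hPQ : ∀ x y : H, ⟪P y, x - P x⟫ = 0 := by
    intro x y
    rw [hPapply, sum_inner]
    refine Finset.sum_eq_zero fun i hi => ?_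
    rw [real_inner_smul_left, hortho x i hi, mul_zero]
  -- A commutes with P
  have hAP : ∀ x : H, A (P x) = P (A x) := by
    intro x
    rw [hPapply, hPapply, map_sum]
    refine Finset.sum_congr rfl fun i hi => ?_
    rw [map_smul, heig i, ← hsym (e i) x, heig i, real_inner_smul_left, smul_smul,
      mul_comm (⟪e i, x⟫) (lam (i+1))]
  -- upper bound on ⟪A (P x), P x⟫
  have hApp : ∀ x : H, ⟪A (P x), P x⟫ ≤ lam N * ⟪P x, P x⟫ := by
    intro x
    have h1 : ⟪A (P x), P x⟫ = ∑ i ∈ Finset.range N, lam (i+1) * ⟪e i, x⟫ ^ 2 := by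
      rw [hPapply, map_sum, sum_inner]
      refine Finset.sum_congr rfl fun i hi => ?_
      rw [map_smul, heig i, smul_smul, real_inner_smul_left, inner_sum]
      simp only [real_inner_smul_right, hone, mul_ite, mul_one, mul_zero]
      rw [Finset.sum_ite_eq (Finset.range N) i (fun j => ⟪e j, x⟫), if_pos hi]
      ring
    have h2 : ⟪(P x : H), P x⟫ = ∑ i ∈ Finset.range N, ⟪e i, x⟫ ^ 2 := by
      rw [hPapply, sum_inner]
      refine Finset.sum_congr rfl fun i hi => ?_
      rw [real_inner_smul_left, inner_sum]
      simp only [real_inner_smul_right, hone, mul_ite, mul_one, mul_zero]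
      rw [Finset.sum_ite_eq (Finset.range N) i (fun j => ⟪e j, x⟫), if_pos hi]
      ring
    rw [h1, h2, Finset.mul_sum]
    refine Finset.sum_le_sum fun i hi => ?_
    have : lam (i+1) ≤ lam N := hmono (Finset.mem_range.mp hi)
    nlinarith [sq_nonneg (⟪e i, x⟫ : ℝ)]
  -- lower bound on ⟪A (x - P x), x - P x⟫ via the Hilbert basis
  have hAqq : ∀ x : H, lam (N+1) * ⟪x - P x, x - P x⟫ ≤ ⟪A (x - P x), x - P x⟫ := by
    intro x
    set y := x - P x with hy
    have h1 : HasSum (fun i => ⟪y, e i⟫ * ⟪e i, A y⟫) ⟪y, A y⟫ := by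
      have h := (HilbertBasis.mk he hcomplete.ge).hasSum_inner_mul_inner y (A y)
      rwa [HilbertBasis.coe_mk he hcomplete.ge] at h
    have h2 : HasSum (fun i => ⟪y, e i⟫ * ⟪e i, y⟫) ⟪y, y⟫ := by
      have h := (HilbertBasis.mk he hcomplete.ge).hasSum_inner_mul_inner y y
      rwa [HilbertBasis.coe_mk he hcomplete.ge] at h
    have h1' : HasSum (fun i => lam (i+1) * (⟪e i, y⟫ * ⟪e i, y⟫)) ⟪y, A y⟫ := by
      refine h1.congr_fun fun i => ?_
      rw [← hsym (e i) y, heig i, real_inner_smul_left, real_inner_comm y (e i)]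
      ring
    have h2' : HasSum (fun i => lam (N+1) * (⟪e i, y⟫ * ⟪e i, y⟫)) (lam (N+1) * ⟪y, y⟫) := by
      refine (h2.mul_left _).congr_fun fun i => ?_
      rw [real_inner_comm y (e i)]
    have h3 := h1'.sub h2'
    have h4 : 0 ≤ ⟪y, A y⟫ - lam (N+1) * ⟪y, y⟫ := by
      refine h3.nonneg fun i => ?_
      rcases lt_or_ge i N with hiN | hiN
      · have : ⟪e i, y⟫ = 0 := hortho x i (Finset.mem_range.mpr hiN)
        simp [this]
      · have : lam (N+1) ≤ lam (i+1) := hmono (by omega)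
        nlinarith [mul_self_nonneg (⟪e i, y⟫ : ℝ)]
    rw [real_inner_comm (A y) y] at *
    linarith
  -- derivative of w
  have hw' : ∀ t, HasDerivAt w (-(ν • A (w t)) - g t) t := by
    intro t
    have h := (hu₁ t).sub (hu₂ t)
    convert h using 1
    · rfl
    simp only [hwdef, hgdef, map_sub, smul_sub]
    abel
  -- p and q as projections of w
  have hpw : ∀ t, p t = P (w t) := fun t => by rw [hp t, hPapply]
  have hqw : ∀ t, q t = w t - P (w t) := fun t => by rw [hq t, hpw t]
  -- derivatives of p and q
  have hp' : ∀ t, HasDerivAt p (-(ν • A (p t)) - P (g t)) t := by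
    intro t
    have h : HasDerivAt (fun s => P (w s)) (P (-(ν • A (w t)) - g t)) t :=
      P.hasFDerivAt.comp_hasDerivAt t (hw' t)
    have heq : P (-(ν • A (w t)) - g t) = -(ν • A (P (w t))) - P (g t) := by
      rw [map_sub, map_neg, map_smul, ← hAP]
    rw [heq] at h
    have hpP : p = fun s => P (w s) := funext hpw
    have h2 : HasDerivAt p (-(ν • A (P (w t))) - P (g t)) t := by
      rw [hpP]; exact h
    rwa [← hpw t] at h2
  have hq' : ∀ t, HasDerivAt q (-(ν • A (q t)) - (g t - P (g t))) t := by
    intro t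
    have h := (hw' t).sub (hp' t)
    have hqQ : q = fun s => w s - p s := funext fun s => by
      rw [hq s]
    have h2 : HasDerivAt q (-(ν • A (w t)) - g t - (-(ν • A (p t)) - P (g t))) t := by
      rw [hqQ]; exact h
    have heq : -(ν • A (q t)) - (g t - P (g t))
        = -(ν • A (w t)) - g t - (-(ν • A (p t)) - P (g t)) := by
      have hqt : q t = w t - p t := by rw [hq t]
      rw [hqt, map_sub, smul_sub]
      abel
    rwa [heq]
  -- the scalar function ψ
  set ψ : ℝ → ℝ := fun s => ⟪q s, q s⟫ - γ^2 * ⟪p s, p s⟫ with hψdef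
  set Dq : ℝ → H := fun s => -(ν • A (q s)) - (g s - P (g s)) with hDq
  set Dp : ℝ → H := fun s => -(ν • A (p s)) - P (g s) with hDp
  have hψ' : ∀ s, HasDerivAt ψ
      ((⟪q s, Dq s⟫ + ⟪Dq s, q s⟫) - γ^2 * (⟪p s, Dp s⟫ + ⟪Dp s, p s⟫)) s := by
    intro s
    exact ((hq' s).inner ℝ (hq' s)).sub (((hp' s).inner ℝ (hp' s)).const_mul (γ^2))
  have hψcont : Continuous ψ :=
    continuous_iff_continuousAt.mpr fun s => (hψ' s).continuousAt
  -- translate the inclusion and conclusion between norms and ψ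
  have hψt₀ : ψ t₀ ≤ 0 := by
    simp only [hψdef, real_inner_self_eq_norm_sq]
    nlinarith [norm_nonneg (q t₀), norm_nonneg (p t₀)]
  have hconc : ∀ s, ψ s ≤ 0 → ‖q s‖ ≤ γ * ‖p s‖ := by
    intro s hs
    simp only [hψdef, real_inner_self_eq_norm_sq] at hs
    nlinarith [norm_nonneg (q s), norm_nonneg (p s), mul_nonneg hγ.le (norm_nonneg (p s))]
  -- case N = 0 : then p = 0 and w t₀ = 0, use Gronwall
  rcases Nat.eq_zero_or_pos N with hN0 | hNpos
  · have hp0 : ∀ s, p s = 0 := by intro s; rw [hp s, hN0]; simp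
    have hP0 : ∀ x : H, P x = 0 := by
      intro x; rw [hPapply]; simp [hN0]
    have hq0 : ∀ s, q s = w s := fun s => by rw [hqw s, hP0, sub_zero]
    have hwt₀ : ‖w t₀‖ ≤ 0 := by
      have := hin
      rw [hq0 t₀, hp0 t₀] at this
      simpa using this
    intro t ht
    have hgron := norm_le_gronwallBound_of_norm_deriv_right_le (f := w)
      (f' := fun s => -(ν • A (w s)) - g s) (δ := 0) (K := ν * ‖A‖ + Lip) (ε := 0)
      (a := t₀) (b := t)
      (fun s _ => (hw' s).continuousAt.continuousWithinAt)
      (fun s _ => (hw' s).hasDerivWithinAt)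
      hwt₀
      (by
        intro s _
        have h1 : ‖-(ν • A (w s)) - g s‖ ≤ ‖ν • A (w s)‖ + ‖g s‖ := by
          rw [← norm_neg (ν • A (w s))] at *
          exact norm_sub_le _ _
        have h2 : ‖ν • A (w s)‖ ≤ ν * ‖A‖ * ‖w s‖ := by
          rw [norm_smul, Real.norm_eq_abs, abs_of_pos hν, mul_assoc]
          exact mul_le_mul_of_nonneg_left (A.le_opNorm _) hν.le
        have h3 := hgw s
        calc ‖-(ν • A (w s)) - g s‖ ≤ ν * ‖A‖ * ‖w s‖ + Lip * ‖w s‖ := by linarith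
        _ = (ν * ‖A‖ + Lip) * ‖w s‖ + 0 := by ring)
    have := hgron t ⟨ht, le_refl t⟩
    rw [gronwallBound_ε0_δ0] at this
    rw [hq0 t, hp0 t]
    simpa using this
  -- main case N ≥ 1
  have hlamN : 0 ≤ lam N := le_trans hlam₁.le (hmono hNpos)
  have hgap' : Lip * (γ + 1)^2 < ν * γ * (lam (N+1) - lam N) := by
    rw [div_lt_iff₀ (by positivity)] at hgap
    linarith [hgap]
  -- key pointwise estimate: if ψ s > 0 then the derivative of ψ is ≤ 0
  have hkey : ∀ s, 0 < ψ s →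
      (⟪q s, Dq s⟫ + ⟪Dq s, q s⟫) - γ^2 * (⟪p s, Dp s⟫ + ⟪Dp s, p s⟫) ≤ 0 := by
    intro s hs
    set a := ‖p s‖ with ha
    set b := ‖q s‖ with hb
    have ha0 : 0 ≤ a := norm_nonneg _
    have hb0 : 0 ≤ b := norm_nonneg _
    -- from ψ s > 0 : γ a ≤ b
    have hab : γ * a ≤ b := by
      simp only [hψdef, real_inner_self_eq_norm_sq] at hs
      nlinarith [mul_nonneg hγ.le ha0]
    -- inner products with the derivative terms
    have hPgq : ⟪P (g s), q s⟫ = 0 := by rw [hqw s]; exact hPQ (w s) (g s)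
    have hPgp : ⟪P (g s), p s⟫ = ⟪g s, p s⟫ := by
      have h0 : ⟪P (w s), g s - P (g s)⟫ = 0 := hPQ (g s) (w s)
      rw [inner_sub_right] at h0
      rw [hpw s, real_inner_comm (P (w s)) (P (g s)), real_inner_comm (P (w s)) (g s)]
      linarith
    have hQq : ⟪Dq s, q s⟫ = -(ν * ⟪A (q s), q s⟫) - ⟪g s, q s⟫ := by
      rw [hDq]
      simp only [inner_sub_left, inner_neg_left, real_inner_smul_left]
      rw [hPgq]
      ring
    have hPp : ⟪Dp s, p s⟫ = -(ν * ⟪A (p s), p s⟫) - ⟪g s, p s⟫ := by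
      rw [hDp]
      simp only [inner_sub_left, inner_neg_left, real_inner_smul_left]
      rw [hPgp]
    -- spectral bounds
    have hAq : lam (N+1) * ⟪q s, q s⟫ ≤ ⟪A (q s), q s⟫ := by
      have := hAqq (w s)
      rwa [← hqw s] at this
    have hAp : ⟪A (p s), p s⟫ ≤ lam N * ⟪p s, p s⟫ := by
      have := hApp (w s)
      rwa [← hpw s] at this
    -- Lipschitz bounds
    have hwpq : ‖w s‖ ≤ a + b := by
      have : w s = p s + q s := by rw [hqw s, hpw s]; abel
      rw [this]
      exact norm_add_le _ _
    have hgs : ‖g s‖ ≤ Lip * (a + b) := le_trans (hgw s)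
      (mul_le_mul_of_nonneg_left hwpq hLippos.le)
    have hgq : |⟪g s, q s⟫| ≤ Lip * (a + b) * b := by
      calc |⟪g s, q s⟫| ≤ ‖g s‖ * ‖q s‖ := abs_real_inner_le_norm _ _
      _ ≤ Lip * (a + b) * b := by
        exact mul_le_mul_of_nonneg_right hgs hb0
    have hgp : |⟪g s, p s⟫| ≤ Lip * (a + b) * a := by
      calc |⟪g s, p s⟫| ≤ ‖g s‖ * ‖p s‖ := abs_real_inner_le_norm _ _
      _ ≤ Lip * (a + b) * a := mul_le_mul_of_nonneg_right hgs ha0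
    -- norms as inner products
    have hqq : ⟪q s, q s⟫ = b^2 := by rw [real_inner_self_eq_norm_sq]
    have hpp : ⟪p s, p s⟫ = a^2 := by rw [real_inner_self_eq_norm_sq]
    have hsymq : ⟪q s, Dq s⟫ = ⟪Dq s, q s⟫ := real_inner_comm _ _
    have hsymp : ⟪p s, Dp s⟫ = ⟪Dp s, p s⟫ := real_inner_comm _ _
    rw [hsymq, hsymp, hQq, hPp]
    rw [hqq] at hAq
    rw [hpp] at hAp
    -- now a purely arithmetic estimate
    have habs1 : -⟪g s, q s⟫ ≤ Lip * (a+b) * b := by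
      have := abs_le.mp hgq
      linarith [this.1]
    have habs2 : ⟪g s, p s⟫ ≤ Lip * (a+b) * a := (abs_le.mp hgp).2
    exact cone_arith hν hγ hLippos hlamN hgap' ha0 hb0 hab hAq hAp habs1 habs2
  -- cone invariance via a first-crossing argument
  intro t ht
  by_contra hcon
  push_neg at hcon
  have hψt : 0 < ψ t := by
    simp only [hψdef, real_inner_self_eq_norm_sq]
    nlinarith [norm_nonneg (q t), mul_nonneg hγ.le (norm_nonneg (p t))]
  set S := {s | s ∈ Set.Icc t₀ t ∧ ψ s ≤ 0} with hSdef
  have hSclosed : IsClosed S := by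
    have : S = Set.Icc t₀ t ∩ {s | ψ s ≤ 0} := rfl
    rw [this]
    exact isClosed_Icc.inter (isClosed_le hψcont continuous_const)
  have hSne : S.Nonempty := ⟨t₀, ⟨le_refl _, ht⟩, hψt₀⟩
  have hSbdd : BddAbove S := ⟨t, fun s hs => hs.1.2⟩
  set τ := sSup S with hτdef
  have hτS : τ ∈ S := hSclosed.csSup_mem hSne hSbdd
  have hτt : τ ≤ t := hτS.1.2
  have hτlt : τ < t := by
    rcases lt_or_eq_of_le hτt with h | h
    · exact h
    · exfalso; have h2 := hτS.2; rw [h] at h2; linarith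
  have hpos : ∀ s ∈ Set.Ioc τ t, 0 < ψ s := by
    intro s hs
    by_contra hns
    push_neg at hns
    have hsS : s ∈ S := ⟨⟨le_trans hτS.1.1 hs.1.le, hs.2⟩, hns⟩
    exact absurd (le_csSup hSbdd hsS) (not_le.mpr hs.1)
  have hanti : AntitoneOn ψ (Set.Icc τ t) := by
    refine antitoneOn_of_deriv_nonpos (convex_Icc τ t) (hψcont.continuousOn) ?_ ?_
    · intro s _
      exact (hψ' s).differentiableAt.differentiableWithinAt
    · intro s hs
      rw [interior_Icc] at hs
      rw [(hψ' s).deriv]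
      exact hkey s (hpos s ⟨hs.1, hs.2.le⟩)
  have := hanti (Set.left_mem_Icc.mpr hτt) (Set.right_mem_Icc.mpr hτt) hτt
  linarith [hτS.2]
end

section
/- Let p, q : [t₀, ∞) → [0, ∞) be absolutely continuous functions satisfying, for a.e. t, p'(t) ≥ −νλ_N p(t) − L(p(t) + q(t)) and q'(t) ≤ −νλ_{N+1} q(t) + L(p(t) + q(t)), with constants ν, L, γ > 0 and λ_{N+1} − λ_N > L(γ+1)²/(νγ). If q(t₀) ≤ γ p(t₀), then q(t) ≤ γ p(t) for all t ≥ t₀. -/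
open MeasureTheory

/-- ODE comparison lemma abstracting the cone invariance argument: if `p, q ≥ 0` are
absolutely continuous (with a.e. derivatives `gp, gq`, encoded via FTC) satisfying
`p' ≥ -νλ_N p - L(p+q)` and `q' ≤ -νλ_{N+1} q + L(p+q)` a.e., the spectral gap
`λ_{N+1} - λ_N > L(γ+1)²/(νγ)` holds, and `q(t₀) ≤ γ p(t₀)`, then `q(t) ≤ γ p(t)`
for all `t ≥ t₀`. -/
theorem cone_invariance_ode (ν L γ lamN lamN1 t₀ : ℝ)
    (hν : 0 < ν) (hL : 0 < L) (hγ : 0 < γ)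
    (hgap : L * (γ + 1) ^ 2 / (ν * γ) < lamN1 - lamN)
    (p q gp gq : ℝ → ℝ)
    (hp0 : ∀ t, t₀ ≤ t → 0 ≤ p t) (hq0 : ∀ t, t₀ ≤ t → 0 ≤ q t)
    (hip : ∀ t, t₀ ≤ t → IntervalIntegrable gp volume t₀ t)
    (hiq : ∀ t, t₀ ≤ t → IntervalIntegrable gq volume t₀ t)
    (hpftc : ∀ t, t₀ ≤ t → p t = p t₀ + ∫ s in t₀..t, gp s)
    (hqftc : ∀ t, t₀ ≤ t → q t = q t₀ + ∫ s in t₀..t, gq s)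
    (hgp : ∀ᵐ t ∂volume, t₀ ≤ t → -(ν * lamN * p t) - L * (p t + q t) ≤ gp t)
    (hgq : ∀ᵐ t ∂volume, t₀ ≤ t → gq t ≤ -(ν * lamN1 * q t) + L * (p t + q t))
    (hinit : q t₀ ≤ γ * p t₀) :
    ∀ t, t₀ ≤ t → q t ≤ γ * p t := by
  intro t₁ ht₁
  by_contra hcon
  push_neg at hcon
  set F : ℝ → ℝ := fun s => q s - γ * p s with hFdef
  set G : ℝ → ℝ := fun s => gq s - γ * gp s with hGdef
  set K : ℝ := max (L * (γ + 1) - ν * lamN1) 0 with hKdef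
  have hFt₁ : 0 < F t₁ := sub_pos.mpr hcon
  have hFt₀ : F t₀ ≤ 0 := sub_nonpos.mpr hinit
  have ht01 : t₀ < t₁ := by
    rcases lt_or_eq_of_le ht₁ with h | h
    · exact h
    · exfalso; rw [← h] at hFt₁; linarith
  -- spectral gap, multiplied out
  have hgapm : L * (γ + 1) ^ 2 < ν * γ * (lamN1 - lamN) := by
    have h := (div_lt_iff₀ (by positivity : (0:ℝ) < ν * γ)).mp hgap
    nlinarith
  -- the key a.e. differential inequality for F
  have key : ∀ᵐ t ∂volume, (t₀ ≤ t → 0 ≤ F t → G t ≤ K * F t) := by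
    filter_upwards [hgp, hgq] with t h1 h2
    intro ht hFt
    have h1' := h1 ht
    have h2' := h2 ht
    have hp := hp0 t ht
    have hq := hq0 t ht
    have hKge : L * (γ + 1) - ν * lamN1 ≤ K := le_max_left _ _
    have e1 : 0 ≤ (ν * γ * (lamN1 - lamN) - L * (γ + 1) ^ 2) * p t :=
      mul_nonneg (by linarith) hp
    have e2 : 0 ≤ (K - (L * (γ + 1) - ν * lamN1)) * F t :=
      mul_nonneg (by linarith) hFt
    have e3 : γ * (-(ν * lamN * p t) - L * (p t + q t)) ≤ γ * gp t :=
      mul_le_mul_of_nonneg_left h1' hγ.le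
    have hFt' : F t = q t - γ * p t := rfl
    have hGt' : G t = gq t - γ * gp t := rfl
    rw [hGt', hFt']
    rw [hFt'] at e2
    nlinarith [e1, e2, e3, h2']
  -- integrability on subintervals of [t₀, t₁]
  have hmem : ∀ {a : ℝ}, a ∈ Set.Icc t₀ t₁ → a ∈ Set.uIcc t₀ t₁ := by
    intro a ha; rw [Set.uIcc_of_le ht₁]; exact ha
  have hip' : ∀ {a b : ℝ}, a ∈ Set.Icc t₀ t₁ → b ∈ Set.Icc t₀ t₁ →
      IntervalIntegrable gp volume a b := fun ha hb =>
    (hip t₁ ht₁).mono_set (Set.uIcc_subset_uIcc (hmem ha) (hmem hb))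
  have hiq' : ∀ {a b : ℝ}, a ∈ Set.Icc t₀ t₁ → b ∈ Set.Icc t₀ t₁ →
      IntervalIntegrable gq volume a b := fun ha hb =>
    (hiq t₁ ht₁).mono_set (Set.uIcc_subset_uIcc (hmem ha) (hmem hb))
  have hGint : ∀ {a b : ℝ}, a ∈ Set.Icc t₀ t₁ → b ∈ Set.Icc t₀ t₁ →
      IntervalIntegrable G volume a b := fun ha hb =>
    (hiq' ha hb).sub ((hip' ha hb).const_mul γ)
  -- FTC for F
  have hFftc : ∀ {a b : ℝ}, a ∈ Set.Icc t₀ t₁ → b ∈ Set.Icc t₀ t₁ → a ≤ b →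
      F b = F a + ∫ s in a..b, G s := by
    intro a b ha hb hab
    have hqa := hqftc a ha.1
    have hqb := hqftc b hb.1
    have hpa := hpftc a ha.1
    have hpb := hpftc b hb.1
    have addq : (∫ s in t₀..a, gq s) + ∫ s in a..b, gq s = ∫ s in t₀..b, gq s :=
      intervalIntegral.integral_add_adjacent_intervals (hiq a ha.1) (hiq' ha hb)
    have addp : (∫ s in t₀..a, gp s) + ∫ s in a..b, gp s = ∫ s in t₀..b, gp s :=
      intervalIntegral.integral_add_adjacent_intervals (hip a ha.1) (hip' ha hb)
    have q_eq : q b - q a = ∫ s in a..b, gq s := by linarith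
    have p_eq : p b - p a = ∫ s in a..b, gp s := by linarith
    have hsplit : ∫ s in a..b, G s = (∫ s in a..b, gq s) - γ * ∫ s in a..b, gp s := by
      rw [show G = fun s => gq s - γ * gp s from rfl]
      rw [intervalIntegral.integral_sub (hiq' ha hb) ((hip' ha hb).const_mul γ),
        intervalIntegral.integral_const_mul]
    rw [show F b = q b - γ * p b from rfl, show F a = q a - γ * p a from rfl, hsplit]
    linear_combination q_eq - γ * p_eq
  -- continuity of F on [t₀, t₁]
  have ht₀m : t₀ ∈ Set.Icc t₀ t₁ := Set.left_mem_Icc.mpr ht₁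
  have ht₁m : t₁ ∈ Set.Icc t₀ t₁ := Set.right_mem_Icc.mpr ht₁
  have hFcont : ContinuousOn F (Set.Icc t₀ t₁) := by
    have hprim : ContinuousOn (fun x => ∫ s in t₀..x, G s) (Set.uIcc t₀ t₁) :=
      intervalIntegral.continuousOn_primitive_interval' (hGint ht₀m ht₁m) Set.left_mem_uIcc
    rw [Set.uIcc_of_le ht₁] at hprim
    refine ContinuousOn.congr (f := fun x => F t₀ + ∫ s in t₀..x, G s)
      (continuousOn_const.add hprim) ?_
    intro x hx
    exact hFftc ht₀m hx hx.1
  -- the set of times where F ≤ 0, and its sup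
  set S : Set ℝ := {s | s ∈ Set.Icc t₀ t₁ ∧ F s ≤ 0} with hSdef
  have hSne : S.Nonempty := ⟨t₀, ht₀m, hFt₀⟩
  have hSbdd : BddAbove S := ⟨t₁, fun s hs => hs.1.2⟩
  have hSclosed : IsClosed S := by
    have : S = Set.Icc t₀ t₁ ∩ F ⁻¹' Set.Iic 0 := by
      ext s; simp [hSdef, Set.mem_Iic]
    rw [this]
    exact hFcont.preimage_isClosed_of_isClosed isClosed_Icc isClosed_Iic
  set s₁ : ℝ := sSup S with hs₁def
  have hs₁S : s₁ ∈ S := hSclosed.csSup_mem hSne hSbdd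
  have hs₁mem : s₁ ∈ Set.Icc t₀ t₁ := hs₁S.1
  have hs₁lt : s₁ < t₁ := by
    rcases lt_or_eq_of_le hs₁mem.2 with h | h
    · exact h
    · exfalso; rw [h] at hs₁S; linarith [hs₁S.2]
  have hpos : ∀ s ∈ Set.Ioc s₁ t₁, 0 < F s := by
    intro s hs
    by_contra hns
    push_neg at hns
    have hsS : s ∈ S := ⟨⟨hs₁mem.1.trans hs.1.le, hs.2⟩, hns⟩
    exact absurd (le_csSup hSbdd hsS) (not_le.mpr hs.1)
  have hFs₁0 : F s₁ = 0 := by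
    refine le_antisymm hs₁S.2 ?_
    have hne : (nhdsWithin s₁ (Set.Ioc s₁ t₁)).NeBot := by
      refine mem_closure_iff_nhdsWithin_neBot.mp ?_
      rw [closure_Ioc hs₁lt.ne]
      exact Set.left_mem_Icc.mpr hs₁lt.le
    have htend : Filter.Tendsto F (nhdsWithin s₁ (Set.Ioc s₁ t₁)) (nhds (F s₁)) :=
      (hFcont s₁ hs₁mem).mono fun x hx => ⟨hs₁mem.1.trans hx.1.le, hx.2⟩
    exact ge_of_tendsto htend (eventually_mem_nhdsWithin.mono fun s hs => (hpos s hs).le)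
  have hFnn : ∀ x ∈ Set.Icc s₁ t₁, 0 ≤ F x := by
    intro x hx
    rcases eq_or_lt_of_le hx.1 with h | h
    · rw [← h]; exact hFs₁0.ge
    · exact (hpos x ⟨h, hx.2⟩).le
  have hsub : ∀ {x : ℝ}, x ∈ Set.Icc s₁ t₁ → x ∈ Set.Icc t₀ t₁ := fun hx =>
    ⟨hs₁mem.1.trans hx.1, hx.2⟩
  -- interval integrability of F
  have hFi : ∀ {a b : ℝ}, a ∈ Set.Icc t₀ t₁ → b ∈ Set.Icc t₀ t₁ →
      IntervalIntegrable F volume a b := by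
    intro a b ha hb
    refine (hFcont.mono ?_).intervalIntegrable
    rw [← Set.uIcc_of_le ht₁]
    exact Set.uIcc_subset_uIcc (hmem ha) (hmem hb)
  set φ : ℝ → ℝ := fun x => ∫ s in s₁..x, F s with hφdef
  have hφnn : ∀ x ∈ Set.Icc s₁ t₁, 0 ≤ φ x := by
    intro x hx
    exact intervalIntegral.integral_nonneg hx.1 fun s hs => hFnn s ⟨hs.1, hs.2.trans hx.2⟩
  -- the core integral inequality
  have hkeyx : ∀ x ∈ Set.Icc s₁ t₁, F x ≤ K * φ x := by
    intro x hx
    have hxm : x ∈ Set.Icc t₀ t₁ := hsub hx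
    have h1 : F x = ∫ s in s₁..x, G s := by
      have h := hFftc hs₁mem hxm hx.1
      rw [hFs₁0] at h
      linarith
    have hle : (∫ s in s₁..x, G s) ≤ ∫ s in s₁..x, K * F s := by
      refine intervalIntegral.integral_mono_ae_restrict hx.1 (hGint hs₁mem hxm)
        ((hFi hs₁mem hxm).const_mul K) ?_
      have h2 : ∀ᵐ t ∂(volume.restrict (Set.Icc s₁ x)),
          (t₀ ≤ t → 0 ≤ F t → G t ≤ K * F t) := ae_restrict_of_ae key
      filter_upwards [h2, ae_restrict_mem measurableSet_Icc] with t hk ht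
      exact hk (hs₁mem.1.trans ht.1) (hFnn t ⟨ht.1, ht.2.trans hx.2⟩)
    calc F x = ∫ s in s₁..x, G s := h1
      _ ≤ ∫ s in s₁..x, K * F s := hle
      _ = K * φ x := intervalIntegral.integral_const_mul _ _
  -- Grönwall for φ
  have hφcont : ContinuousOn φ (Set.Icc s₁ t₁) := by
    have hprim : ContinuousOn (fun x => ∫ s in s₁..x, F s) (Set.uIcc s₁ t₁) :=
      intervalIntegral.continuousOn_primitive_interval' (hFi hs₁mem ht₁m) Set.left_mem_uIcc
    rwa [Set.uIcc_of_le hs₁lt.le] at hprim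
  have hφderiv : ∀ x ∈ Set.Ico s₁ t₁, HasDerivWithinAt φ (F x) (Set.Ici x) x := by
    intro x hx
    have hxm : x ∈ Set.Icc t₀ t₁ := hsub ⟨hx.1, hx.2.le⟩
    have hmemIcc : Set.Icc t₀ t₁ ∈ nhdsWithin x (Set.Ioi x) := by
      refine mem_nhdsWithin.mpr ⟨Set.Iio t₁, isOpen_Iio, hx.2, ?_⟩
      intro s hs
      exact ⟨hxm.1.trans hs.2.le, hs.1.le⟩
    refine intervalIntegral.integral_hasDerivWithinAt_right (hFi hs₁mem hxm)
      ⟨Set.Icc t₀ t₁, hmemIcc, hFcont.aestronglyMeasurable measurableSet_Icc⟩ ?_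
    exact (hFcont x hxm).mono_of_mem_nhdsWithin hmemIcc
  have hbound : ∀ x ∈ Set.Ico s₁ t₁, ‖F x‖ ≤ K * ‖φ x‖ + 0 := by
    intro x hx
    have hx' : x ∈ Set.Icc s₁ t₁ := ⟨hx.1, hx.2.le⟩
    rw [Real.norm_eq_abs, Real.norm_eq_abs, abs_of_nonneg (hFnn x hx'),
      abs_of_nonneg (hφnn x hx')]
    linarith [hkeyx x hx']
  have hφa : ‖φ s₁‖ ≤ 0 := by
    simp [hφdef, intervalIntegral.integral_same]
  have gr := norm_le_gronwallBound_of_norm_deriv_right_le hφcont hφderiv hφa hbound t₁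
    (Set.right_mem_Icc.mpr hs₁lt.le)
  rw [gronwallBound_ε0_δ0] at gr
  have hφt₁ : φ t₁ = 0 := le_antisymm (le_trans (le_abs_self _) gr)
    (hφnn t₁ (Set.right_mem_Icc.mpr hs₁lt.le))
  have := hkeyx t₁ (Set.right_mem_Icc.mpr hs₁lt.le)
  rw [hφt₁] at this
  linarith
end
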